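/- arXiv:1503.06303 — 2 statements merged into one kernel-verified Lean document; each statement's English description precedes it below -/
import Mathlib

section
/- Let d ≥ 2, let 0 ≤ p ≤ 1, and let ρ be a density matrix on ℂ^d such that every diagonal entry of ρ equals 1/d and every off-diagonal entry of ρ has modulus p/d. Then C(ρ) = (d−1)p and M(ρ) = 1 − p², so ρ attains equality in the coherence–mixedness trade-off: C(ρ)²/(d−1)² + M(ρ) = 1. -/
open scoped ComplexOrder

/-! For Hermitian `ρ`, `Tr(ρ²) = ∑ᵢⱼ |ρᵢⱼ|²`, so both the coherence and the mixedness depend only on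
the moduli of the entries: with `|ρᵢᵢ| = 1/d` and `|ρᵢⱼ| = p/d` one gets `C = d(d-1)·p/d` and
`Tr(ρ²) = 1/d + (d-1)p²/d`, from which the three identities are arithmetic. -/

/-- The `l₁`-norm of coherence of a matrix `ρ` (in the standard basis):
the sum of the absolute values of the off-diagonal entries. -/
noncomputable def l1Coherence {d : ℕ} (ρ : Matrix (Fin d) (Fin d) ℂ) : ℝ :=
  ∑ i, ∑ j, if i = j then 0 else ‖ρ i j‖

/-- The mixedness (normalized linear entropy) of a `d × d` density matrix `ρ`:
`(d/(d-1)) * (1 - Tr(ρ²))`. -/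
noncomputable def mixedness (d : ℕ) (ρ : Matrix (Fin d) (Fin d) ℂ) : ℝ :=
  ((d : ℝ) / ((d : ℝ) - 1)) * (1 - ((ρ * ρ).trace).re)

theorem Fintype.sum_sum_eq_of_diag_offDiag {ι R : Type*} [Fintype ι] [Ring R]
    {f : ι → ι → R} {a b : R} (hdiag : ∀ i, f i i = a) (hoff : ∀ i j, i ≠ j → f i j = b) :
    ∑ i, ∑ j, f i j = Fintype.card ι * a + Fintype.card ι * (Fintype.card ι - 1) * b := by
  classical
  have hf : ∀ i j, f i j = b + if i = j then a - b else 0 := fun i j => by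
    by_cases h : i = j
    · simp [h, hdiag]
    · simp [h, hoff i j h]
  simp only [hf, Finset.sum_add_distrib, Finset.sum_ite_eq, Finset.mem_univ, if_true,
    Finset.sum_const, Finset.card_univ, nsmul_eq_mul]
  noncomm_ring

theorem Matrix.IsHermitian.re_trace_mul_self {n : Type*} [Fintype n] {A : Matrix n n ℂ}
    (hA : A.IsHermitian) : (A * A).trace.re = ∑ i, ∑ j, ‖A i j‖ ^ 2 := by
  have hsum : (A * A).trace = ∑ i, ∑ j, A i j * star (A i j) := by
    simp only [Matrix.trace, Matrix.diag, Matrix.mul_apply]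
    refine Finset.sum_congr rfl fun i _ => Finset.sum_congr rfl fun j _ => ?_
    rw [← hA.apply j i]
  simp only [hsum, RCLike.star_def, Complex.mul_conj, ← Complex.sq_norm, Complex.ofReal_pow,
    Complex.re_sum]
  norm_cast

theorem l1Coherence_eq_of_norm_offDiag {d : ℕ} {ρ : Matrix (Fin d) (Fin d) ℂ} {c : ℝ}
    (hoff : ∀ i j, i ≠ j → ‖ρ i j‖ = c) : l1Coherence ρ = d * (d - 1) * c := by
  rw [l1Coherence, Fintype.sum_sum_eq_of_diag_offDiag (a := 0) (b := c) (by simp)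
    fun i j h => by simp [h, hoff i j h]]
  simp

theorem Matrix.IsHermitian.re_trace_mul_self_of_norm_diag_offDiag {d : ℕ}
    {ρ : Matrix (Fin d) (Fin d) ℂ} (hρ : ρ.IsHermitian) {a c : ℝ}
    (hdiag : ∀ i, ‖ρ i i‖ = a) (hoff : ∀ i j, i ≠ j → ‖ρ i j‖ = c) :
    (ρ * ρ).trace.re = d * a ^ 2 + d * (d - 1) * c ^ 2 := by
  rw [hρ.re_trace_mul_self, Fintype.sum_sum_eq_of_diag_offDiag (a := a ^ 2) (b := c ^ 2)
    (fun i => by rw [hdiag]) fun i j h => by rw [hoff i j h]]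
  simp [mul_assoc]

theorem mcms_form_attains_equality_general {d : ℕ} (hd : 2 ≤ d) (p : ℝ)
    (ρ : Matrix (Fin d) (Fin d) ℂ) (hpsd : ρ.PosSemidef)
    (hdiag : ∀ i, ρ i i = (1 / d : ℂ))
    (hoff : ∀ i j, i ≠ j → ‖ρ i j‖ = p / d) :
    l1Coherence ρ = ((d : ℝ) - 1) * p ∧
    mixedness d ρ = 1 - p ^ 2 ∧
    l1Coherence ρ ^ 2 / ((d : ℝ) - 1) ^ 2 + mixedness d ρ = 1 := by
  have hd2 : (2 : ℝ) ≤ d := by exact_mod_cast hd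
  have hd0 : (d : ℝ) ≠ 0 := by linarith
  have hd1 : (d : ℝ) - 1 ≠ 0 := by linarith
  have hC : l1Coherence ρ = ((d : ℝ) - 1) * p := by
    rw [l1Coherence_eq_of_norm_offDiag hoff]
    field_simp
  have hM : mixedness d ρ = 1 - p ^ 2 := by
    have hdiag' : ∀ i, ‖ρ i i‖ = 1 / d := fun i => by simp [hdiag]
    rw [mixedness, hpsd.isHermitian.re_trace_mul_self_of_norm_diag_offDiag hdiag' hoff]
    field_simp
    ring
  refine ⟨hC, hM, ?_⟩
  rw [hC, hM]
  field_simp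
  ring

/-- **States of MCMS form saturate the coherence–mixedness trade-off.**
If a density matrix `ρ` on `ℂ^d` (`d ≥ 2`) has all diagonal entries equal to `1/d` and all
off-diagonal entries of modulus `p/d` (for some `0 ≤ p ≤ 1`), then `C(ρ) = (d-1)p`,
`M(ρ) = 1 - p²`, and `C(ρ)²/(d-1)² + M(ρ) = 1`. -/
theorem mcms_form_attains_equality {d : ℕ} (hd : 2 ≤ d) (p : ℝ) (hp0 : 0 ≤ p) (hp1 : p ≤ 1)
    (ρ : Matrix (Fin d) (Fin d) ℂ) (hpsd : ρ.PosSemidef) (htr : ρ.trace = 1)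
    (hdiag : ∀ i, ρ i i = (1 / d : ℂ))
    (hoff : ∀ i j, i ≠ j → ‖ρ i j‖ = p / d) :
    l1Coherence ρ = ((d : ℝ) - 1) * p ∧
    mixedness d ρ = 1 - p ^ 2 ∧
    l1Coherence ρ ^ 2 / ((d : ℝ) - 1) ^ 2 + mixedness d ρ = 1 :=
  mcms_form_attains_equality_general hd p ρ hpsd hdiag hoff
end

section
/- Let d ≥ 2 and let ρ be a density matrix on ℂ^d with mixedness M(ρ) = M_f (necessarily 0 ≤ M_f ≤ 1). Then the l1-norm of coherence of ρ satisfies C(ρ) ≤ (d−1)·√(1 − M_f); that is, the maximal coherence attainable at fixed mixedness M_f is (d−1)·√(1 − M_f). -/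
open scoped ComplexOrder

/-!
With `P = Tr ρ² = ∑ᵢⱼ |ρᵢⱼ|²` split into its diagonal part `D` and off-diagonal part `O`,
Cauchy–Schwarz gives `C(ρ)² ≤ d(d-1)·O` and `1 = (Tr ρ)² ≤ d·D`, hence
`C(ρ)² ≤ (d-1)(d·P - 1) = (d-1)²(1 - M(ρ))`; in particular `M(ρ) ≤ 1`.
Nonnegativity of the `2 × 2` principal minors gives `|ρᵢⱼ|² ≤ ρᵢᵢ ρⱼⱼ`, hence
`P ≤ (Tr ρ)² = 1`, i.e. `M(ρ) ≥ 0`.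
-/

open Finset RCLike

theorem Finset.sum_sum_eq_sum_add_sum_offDiag {α M : Type*} [DecidableEq α] [AddCommMonoid M]
    (s : Finset α) (f : α → α → M) :
    ∑ i ∈ s, ∑ j ∈ s, f i j = ∑ i ∈ s, f i i + ∑ q ∈ s.offDiag, f q.1 q.2 := by
  rw [sum_product' s s f |>.symm, ← diag_union_offDiag, sum_union (disjoint_diag_offDiag s),
    sum_diag]

namespace Matrix

variable {n 𝕜 : Type*} [RCLike 𝕜] {A : Matrix n n 𝕜}

theorem IsHermitian.apply_mul_apply_eq_norm_sq (hA : A.IsHermitian) (i j : n) :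
    A i j * A j i = ‖A i j‖ ^ 2 := by
  rw [← hA.apply j i, star_def, mul_conj]

theorem PosSemidef.norm_apply_sq_le (hA : A.PosSemidef) (i j : n) :
    ‖A i j‖ ^ 2 ≤ re (A i i) * re (A j j) := by
  have hminor : 0 ≤ (A.submatrix ![i, j] ![i, j]).det := (hA.submatrix ![i, j]).det_nonneg
  rw [det_fin_two] at hminor
  simp only [submatrix_apply, cons_val_zero, cons_val_one] at hminor
  rw [← hA.isHermitian.coe_re_apply_self i, ← hA.isHermitian.coe_re_apply_self j,
    hA.isHermitian.apply_mul_apply_eq_norm_sq] at hminor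
  exact_mod_cast sub_nonneg.mp hminor

variable [Fintype n]

theorem IsHermitian.re_trace_mul_self_s6 (hA : A.IsHermitian) :
    re (A * A).trace = ∑ i, ∑ j, ‖A i j‖ ^ 2 := by
  simp only [trace, diag_apply, mul_apply, hA.apply_mul_apply_eq_norm_sq, map_sum]
  norm_cast

theorem PosSemidef.re_trace_mul_self_le (hA : A.PosSemidef) :
    re (A * A).trace ≤ re A.trace ^ 2 := by
  rw [hA.isHermitian.re_trace_mul_self_s6, trace, map_sum, sq, sum_mul_sum]
  exact sum_le_sum fun i _ ↦ sum_le_sum fun j _ ↦ hA.norm_apply_sq_le i j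

end Matrix

section Coherence

variable {d : ℕ}

theorem l1Coherence_eq_sum_offDiag (ρ : Matrix (Fin d) (Fin d) ℂ) :
    l1Coherence ρ = ∑ q ∈ univ.offDiag, ‖ρ q.1 q.2‖ := by
  rw [l1Coherence, sum_sum_eq_sum_add_sum_offDiag]
  simp only [if_true, sum_const_zero, zero_add]
  exact sum_congr rfl fun q hq ↦ if_neg (mem_offDiag.mp hq).2.2

theorem sq_l1Coherence_le_mul_sum_offDiag (ρ : Matrix (Fin d) (Fin d) ℂ) :
    l1Coherence ρ ^ 2 ≤ d * (d - 1) * ∑ q ∈ univ.offDiag, ‖ρ q.1 q.2‖ ^ 2 := by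
  rw [l1Coherence_eq_sum_offDiag]
  refine sq_sum_le_card_mul_sum_sq.trans_eq ?_
  congr 1
  rw [offDiag_card, card_univ, Fintype.card_fin, Nat.cast_sub (Nat.le_mul_self d)]
  push_cast
  ring

theorem Matrix.IsHermitian.sq_l1Coherence_le {ρ : Matrix (Fin d) (Fin d) ℂ}
    (hρ : ρ.IsHermitian) :
    l1Coherence ρ ^ 2 ≤ (d - 1) * (d * (ρ * ρ).trace.re - ρ.trace.re ^ 2) := by
  rcases Nat.eq_zero_or_pos d with rfl | hd
  · simp [l1Coherence]
  set O := ∑ q ∈ univ.offDiag, ‖ρ q.1 q.2‖ ^ 2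
  have hsplit : (ρ * ρ).trace.re = ∑ i, ‖ρ i i‖ ^ 2 + O :=
    hρ.re_trace_mul_self_s6.trans (sum_sum_eq_sum_add_sum_offDiag _ _)
  have hdiag : ρ.trace.re ^ 2 ≤ d * ∑ i, ‖ρ i i‖ ^ 2 := calc
    ρ.trace.re ^ 2 ≤ d * ∑ i, (ρ i i).re ^ 2 := by
      simpa [trace] using sq_sum_le_card_mul_sum_sq (s := univ) (f := fun i ↦ (ρ i i).re)
    _ ≤ d * ∑ i, ‖ρ i i‖ ^ 2 := by
      refine mul_le_mul_of_nonneg_left (sum_le_sum fun i _ ↦ ?_) d.cast_nonneg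
      exact sq_le_sq' (abs_le.mp (Complex.abs_re_le_norm _)).1 (Complex.re_le_norm _)
  have hd1 : (0 : ℝ) ≤ d - 1 := sub_nonneg.mpr (mod_cast hd)
  calc l1Coherence ρ ^ 2 ≤ d * (d - 1) * O := sq_l1Coherence_le_mul_sum_offDiag ρ
    _ ≤ (d - 1) * (d * (ρ * ρ).trace.re - ρ.trace.re ^ 2) := by
      rw [hsplit]; nlinarith

theorem one_sub_mixedness (hd : d ≠ 1) (ρ : Matrix (Fin d) (Fin d) ℂ) :
    1 - mixedness d ρ = (d * (ρ * ρ).trace.re - 1) / (d - 1) := by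
  have : (d : ℝ) - 1 ≠ 0 := sub_ne_zero.mpr (mod_cast hd)
  rw [mixedness]
  field_simp
  ring

end Coherence

/-- **Maximal coherence at fixed mixedness.**  For a density matrix `ρ` on `ℂ^d` (`d ≥ 2`)
with mixedness `M(ρ) = M_f`, necessarily `0 ≤ M_f ≤ 1` and the coherence is bounded as
`C(ρ) ≤ (d-1)·√(1 - M_f)`. -/
theorem coherence_le_of_fixed_mixedness {d : ℕ} (hd : 2 ≤ d)
    (ρ : Matrix (Fin d) (Fin d) ℂ) (hpsd : ρ.PosSemidef) (htr : ρ.trace = 1)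
    (M_f : ℝ) (hM : mixedness d ρ = M_f) :
    0 ≤ M_f ∧ M_f ≤ 1 ∧ l1Coherence ρ ≤ ((d : ℝ) - 1) * Real.sqrt (1 - M_f) := by
  set P := (ρ * ρ).trace.re
  have hd1 : (0 : ℝ) < d - 1 := by
    rw [sub_pos]; exact_mod_cast hd
  have hP : P ≤ 1 := by simpa [htr] using hpsd.re_trace_mul_self_le
  have hC : l1Coherence ρ ^ 2 ≤ (d - 1) * (d * P - 1) := by
    simpa [htr] using hpsd.isHermitian.sq_l1Coherence_le
  have hdP : 0 ≤ d * P - 1 := nonneg_of_mul_nonneg_right ((sq_nonneg _).trans hC) hd1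
  have h1M : 1 - M_f = (d * P - 1) / (d - 1) := hM ▸ one_sub_mixedness (by omega) ρ
  refine ⟨?_, ?_, ?_⟩
  · rw [← hM, mixedness]
    have : 0 ≤ 1 - P := sub_nonneg.mpr hP
    positivity
  · linarith [div_nonneg hdP hd1.le]
  · have : ((d : ℝ) - 1) ^ 2 * (1 - M_f) = (d - 1) * (d * P - 1) := by
      rw [h1M]; field_simp
    rw [← Real.sqrt_sq hd1.le, ← Real.sqrt_mul (sq_nonneg _), this]
    exact Real.le_sqrt_of_sq_le hC
end
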